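/- arXiv:1902.04539 — 3 statements merged into one kernel-verified Lean document; each statement's English description precedes it below -/
import Mathlib

section
/- Let b = (b_1,…,b_m) be a sequence of integers, each ≥ −1, with b_1+⋯+b_m = −ρ where ρ ≥ 1. For i ∈ {1,…,m}, let b^i be the i-th cyclic shift, b^i_j = b_{i+j mod m}. Let I = min_{1≤ℓ≤m}(b_1+⋯+b_ℓ). Then the following are equivalent: (1) b^i_1+⋯+b^i_k ≥ 1−ρ for every 1 ≤ k ≤ m−1; (2) there exists p ∈ {0,…,ρ−1} such that i = min{k ∈ {1,…,m} : b_1+⋯+b_k = I+p}. In particular there are exactly ρ indices i satisfying (1). -/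
/-! Write `S ℓ` for the partial sums of `b`. The `i`-th shift has partial sums `S ℓ - S i` for
`i < ℓ ≤ m`, and `S ℓ - S i - ρ` once it has wrapped around to `ℓ < i`. So it is a first-passage
bridge iff `S ℓ ≥ S i + 1 - ρ` after `i` and `S ℓ > S i` before `i`. Testing both conditions at a
minimiser of `S` forces `I ≤ S i < I + ρ`. Since `S` goes down by steps of at most one, it cannot
get to a level `≤ S i` before time `i` without visiting `S i` itself, so the condition before `i`
says exactly that `i` is the first visit of its level. Each of the `ρ` levels `I + p`, `p < ρ`, is
visited between time `0` and a minimiser, which gives the count. -/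

open scoped Classical

open Finset

theorem sum_range_mod_of_add_le (b : ℕ → ℤ) {m i k : ℕ} (h : i + k ≤ m) :
    ∑ j ∈ range k, b ((i + j) % m) = ∑ j ∈ range (i + k), b j - ∑ j ∈ range i, b j := by
  rw [sum_range_add, add_sub_cancel_left]
  exact sum_congr rfl fun j hj => by rw [Nat.mod_eq_of_lt (by simp only [mem_range] at hj; omega)]

theorem sum_range_mod_of_le_add (b : ℕ → ℤ) {m i k : ℕ} (hi : i ≤ m) (hk : k ≤ m)
    (h : m ≤ i + k) :
    ∑ j ∈ range k, b ((i + j) % m) =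
      ∑ j ∈ range m, b j - ∑ j ∈ range i, b j + ∑ j ∈ range (i + k - m), b j := by
  obtain ⟨r, rfl⟩ : ∃ r, k = (m - i) + r := ⟨i + k - m, by omega⟩
  rw [sum_range_add, sum_range_mod_of_add_le b (by omega), Nat.add_sub_cancel' hi,
    show i + (m - i + r) - m = r by omega]
  congr 1
  exact sum_congr rfl fun j hj => by
    rw [← add_assoc, Nat.add_sub_cancel' hi, Nat.add_mod_left,
      Nat.mod_eq_of_lt (by simp only [mem_range] at hj; omega)]

theorem exists_sum_range_eq_of_sum_range_le {b : ℕ → ℤ} {n : ℕ} (hb : ∀ j < n, -1 ≤ b j)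
    {t : ℤ} (ht : t < 0) (hn : ∑ j ∈ range n, b j ≤ t) :
    ∃ k, 1 ≤ k ∧ k ≤ n ∧ ∑ j ∈ range k, b j = t := by
  induction n with
  | zero => simp only [range_zero, sum_empty] at hn; omega
  | succ n ih =>
    by_cases hprev : ∑ j ∈ range n, b j ≤ t
    · obtain ⟨k, hk1, hkn, hk⟩ := ih (fun j hj => hb j (by omega)) hprev
      exact ⟨k, hk1, by omega, hk⟩
    · refine ⟨n + 1, by omega, le_rfl, ?_⟩
      have := hb n (by omega)
      rw [sum_range_succ] at hn ⊢
      omega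

theorem cyclic_shift_sums_ge_iff (b : ℕ → ℤ) {m i : ℕ} (hi1 : 1 ≤ i) (hi2 : i ≤ m) (c : ℤ) :
    (∀ k, 1 ≤ k → k ≤ m - 1 → c ≤ ∑ j ∈ range k, b ((i + j) % m)) ↔
      (∀ ℓ, i < ℓ → ℓ ≤ m → ∑ j ∈ range i, b j + c ≤ ∑ j ∈ range ℓ, b j) ∧
      (∀ ℓ, 1 ≤ ℓ → ℓ < i →
        ∑ j ∈ range i, b j + c - ∑ j ∈ range m, b j ≤ ∑ j ∈ range ℓ, b j) := by
  constructor
  · intro h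
    constructor
    · intro ℓ hiℓ hℓm
      have := h (ℓ - i) (by omega) (by omega)
      rw [sum_range_mod_of_add_le b (by omega), Nat.add_sub_cancel' hiℓ.le] at this
      omega
    · intro ℓ hℓ1 hℓi
      have := h (m - i + ℓ) (by omega) (by omega)
      rw [sum_range_mod_of_le_add b hi2 (by omega) (by omega),
        show i + (m - i + ℓ) - m = ℓ by omega] at this
      omega
  · rintro ⟨hafter, hbefore⟩ k hk1 hkm
    rcases le_or_gt (i + k) m with h | h
    · have := hafter (i + k) (by omega) h
      rw [sum_range_mod_of_add_le b h]
      omega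
    · have := hbefore (i + k - m) (by omega) (by omega)
      rw [sum_range_mod_of_le_add b hi2 (by omega) h.le]
      omega

theorem cyclic_shift_sums_ge_iff_first_hit {m ρ : ℕ} {b : ℕ → ℤ} (hρ : 1 ≤ ρ)
    (hb : ∀ j < m, -1 ≤ b j) (hsum : ∑ j ∈ range m, b j = -(ρ : ℤ)) {I : ℤ}
    (hI : ∀ ℓ, 1 ≤ ℓ → ℓ ≤ m → I ≤ ∑ j ∈ range ℓ, b j)
    {ℓ₀ : ℕ} (hℓ₀1 : 1 ≤ ℓ₀) (hℓ₀m : ℓ₀ ≤ m) (hℓ₀ : ∑ j ∈ range ℓ₀, b j = I)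
    {i : ℕ} (hi1 : 1 ≤ i) (hi2 : i ≤ m) :
    (∀ k, 1 ≤ k → k ≤ m - 1 → 1 - ρ ≤ ∑ j ∈ range k, b ((i + j) % m)) ↔
      ∃ p : ℕ, p < ρ ∧ ∑ j ∈ range i, b j = I + p ∧
        ∀ k, 1 ≤ k → k ≤ m → ∑ j ∈ range k, b j = I + p → i ≤ k := by
  have hIm := hI m (by omega) le_rfl
  rw [cyclic_shift_sums_ge_iff b hi1 hi2, hsum]
  constructor
  · rintro ⟨hafter, hbefore⟩
    have hIi := hI i hi1 hi2
    have hiI : ∑ j ∈ range i, b j < I + ρ := by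
      rcases lt_trichotomy ℓ₀ i with h | rfl | h
      · have := hbefore ℓ₀ hℓ₀1 h
        omega
      · omega
      · have := hafter ℓ₀ h hℓ₀m
        omega
    refine ⟨(∑ j ∈ range i, b j - I).toNat, by omega, by omega, fun k hk1 hkm hk => ?_⟩
    by_contra! hki
    have := hbefore k hk1 hki
    omega
  · rintro ⟨p, hp, hiI, hfirst⟩
    refine ⟨fun ℓ hiℓ hℓm => ?_, fun ℓ hℓ1 hℓi => ?_⟩
    · have := hI ℓ (by omega) hℓm
      omega
    · by_contra! hℓ
      obtain ⟨k, hk1, hkℓ, hk⟩ := exists_sum_range_eq_of_sum_range_le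
        (fun j hj => hb j (by omega)) (n := ℓ) (t := I + p) (by omega) (by omega)
      have := hfirst k hk1 (by omega) hk
      omega

theorem card_filter_first_hit {f : ℕ → ℤ} {s : Finset ℕ} {I : ℤ} {ρ : ℕ}
    (hhit : ∀ p < ρ, ∃ k ∈ s, f k = I + p) :
    (s.filter fun i => ∃ p : ℕ, p < ρ ∧ f i = I + p ∧ ∀ k ∈ s, f k = I + p → i ≤ k).card = ρ := by
  refine (card_bij (fun i _ => (f i - I).toNat) ?_ ?_ ?_).trans (card_range ρ)
  · simp only [mem_filter, mem_range]
    rintro i ⟨-, p, hp, hi, -⟩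
    omega
  · simp only [mem_filter]
    rintro i₁ ⟨hi₁, p₁, -, h₁, hmin₁⟩ i₂ ⟨hi₂, p₂, -, h₂, hmin₂⟩ heq
    have : p₁ = p₂ := by omega
    subst this
    exact le_antisymm (hmin₁ i₂ hi₂ h₂) (hmin₂ i₁ hi₁ h₁)
  · intro p hp
    have hex := hhit p (mem_range.mp hp)
    refine ⟨Nat.find hex, ?_, ?_⟩
    · obtain ⟨hmem, hval⟩ := Nat.find_spec hex
      exact mem_filter.mpr
        ⟨hmem, p, mem_range.mp hp, hval, fun k hk hkp => Nat.find_min' hex ⟨hk, hkp⟩⟩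
    · have := (Nat.find_spec hex).2
      omega

/-- The cyclic lemma (discrete Vervaat transform).  Let `b 0, …, b (m-1)` be integers, each
`≥ -1`, summing to `-ρ` with `ρ ≥ 1`.  For `1 ≤ i ≤ m`, the `i`-th cyclic shift has all its
partial sums up to time `m-1` at least `1-ρ` if and only if `i` is the first time the partial
sums of `b` hit `I + p` for some `p ∈ {0,…,ρ-1}`, where `I` is the minimum of the partial sums.
In particular exactly `ρ` of the `m` cyclic shifts are first-passage bridges. -/
theorem cyclic_lemma (m ρ : ℕ) (hm : 1 ≤ m) (hρ : 1 ≤ ρ) (b : ℕ → ℤ)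
    (hb : ∀ j < m, -1 ≤ b j)
    (hsum : ∑ j ∈ Finset.range m, b j = -(ρ : ℤ)) :
    (∀ i, 1 ≤ i → i ≤ m →
      ((∀ k, 1 ≤ k → k ≤ m - 1 →
          (1 : ℤ) - ρ ≤ ∑ j ∈ Finset.range k, b ((i + j) % m)) ↔
        (∃ p : ℕ, p < ρ ∧
          (∑ j ∈ Finset.range i, b j) =
            (Finset.Icc 1 m).inf' (Finset.nonempty_Icc.mpr hm)
              (fun ℓ => ∑ j ∈ Finset.range ℓ, b j) + p ∧
          ∀ k, 1 ≤ k → k ≤ m →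
            (∑ j ∈ Finset.range k, b j) =
              (Finset.Icc 1 m).inf' (Finset.nonempty_Icc.mpr hm)
                (fun ℓ => ∑ j ∈ Finset.range ℓ, b j) + p → i ≤ k))) ∧
    ((Finset.Icc 1 m).filter (fun i => ∀ k, 1 ≤ k → k ≤ m - 1 →
        (1 : ℤ) - ρ ≤ ∑ j ∈ Finset.range k, b ((i + j) % m))).card = ρ := by
  set I := (Icc 1 m).inf' (nonempty_Icc.mpr hm) fun ℓ => ∑ j ∈ range ℓ, b j
  have hI : ∀ ℓ, 1 ≤ ℓ → ℓ ≤ m → I ≤ ∑ j ∈ range ℓ, b j := fun ℓ h1 h2 =>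
    inf'_le _ (mem_Icc.mpr ⟨h1, h2⟩)
  obtain ⟨ℓ₀, hℓ₀mem, hℓ₀⟩ :=
    exists_mem_eq_inf' (nonempty_Icc.mpr hm) fun ℓ => ∑ j ∈ range ℓ, b j
  obtain ⟨hℓ₀1, hℓ₀m⟩ := mem_Icc.mp hℓ₀mem
  have hbridge := fun i (hi1 : 1 ≤ i) (hi2 : i ≤ m) =>
    cyclic_shift_sums_ge_iff_first_hit hρ hb hsum hI hℓ₀1 hℓ₀m hℓ₀.symm hi1 hi2
  refine ⟨hbridge, ?_⟩
  have hIm := hI m hm le_rfl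
  have hhit : ∀ p < ρ, ∃ k ∈ Icc 1 m, ∑ j ∈ range k, b j = I + p := fun p hp => by
    obtain ⟨k, hk1, hkℓ₀, hk⟩ := exists_sum_range_eq_of_sum_range_le (n := ℓ₀) (t := I + p)
      (fun j hj => hb j (by omega)) (by omega) (by omega)
    exact ⟨k, mem_Icc.mpr ⟨hk1, by omega⟩, hk⟩
  convert card_filter_first_hit hhit using 2
  ext i
  simp only [mem_filter, mem_Icc, and_imp]
  exact and_congr_right fun hi => hbridge i hi.1 hi.2
end

section
/- Let T be a plane tree with Łukasiewicz path W (defined by W(0)=0 and W(j+1)=W(j)+k_{x_j}−1 where x_0<x_1<… are the vertices in lexicographic order and k_x is the number of children of x). Then for every vertex x ∈ T and all 1 ≤ j ≤ j' ≤ k_x: W(x k_x) = W(x), W(x j') = min over the lexicographic interval [x j, x j'] of W, and j' − j = W(x j) − W(x j'). -/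
/-- Number of children in `T` of the vertex `x` (vertices are finite sequences of integers,
the parent of a non-empty sequence is obtained by dropping its last entry). -/
def kch (T : Finset (List ℕ)) (x : List ℕ) : ℕ :=
  (T.filter (fun y => y ≠ [] ∧ y.dropLast = x)).card

/-- `T` is a plane tree: it contains the root `[]`, is stable under taking parents, and the
children of a vertex `x` with `kch T x` children are exactly `x ++ [i]` for `1 ≤ i ≤ kch T x`. -/
def IsPlaneTree (T : Finset (List ℕ)) : Prop :=
  [] ∈ T ∧ (∀ x ∈ T, x ≠ [] → x.dropLast ∈ T) ∧
    ∀ x ∈ T, ∀ i : ℕ, (x ++ [i] ∈ T ↔ 1 ≤ i ∧ i ≤ kch T x)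

/-- The Łukasiewicz path of `T`: `W 0 = 0` and `W (j+1) = W j + k_{x_j} - 1`, where
`x_0 < x_1 < ⋯` are the vertices of `T` in lexicographic order. -/
def lukW (T : Finset (List ℕ)) (m : ℕ) : ℤ :=
  ∑ i ∈ Finset.range m, ((kch T ((T.sort (· ≤ ·)).getD i []) : ℤ) - 1)

/-! Write `lukWAt T w` for the sum of `k_u - 1` over the vertices `u < w`; at the index of a
vertex `w`, the path `W` takes the value `lukWAt T w`. A set `S` of vertices contributes
`∑_{u ∈ S} (k_u - 1) = #(children of S) - #S`, so a subtree contributes `-1` and a set closed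
under taking children contributes at most `0`. The vertices in `[x j, x j')` form the disjoint
union of the subtrees rooted at `x j, …, x (j' - 1)`, whence `W (x j') = W (x j) - (j' - j)`; the
only vertex in `[x, x 1)` is `x`, whence `W (x 1) = W x + k_x - 1` and so `W (x k_x) = W x`.
For `x j ≤ v ≤ x j'` the vertices in `[v, x j')` are closed under taking children, whence
`W (x j') ≤ W v`. -/
namespace List

variable {α : Type*} [LinearOrder α]

theorem append_lt_append_left_iff (p : List α) {l₁ l₂ : List α} :
    p ++ l₁ < p ++ l₂ ↔ l₁ < l₂ := by
  induction p with
  | nil => rfl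
  | cons a p ih => simpa [cons_lt_cons_iff] using ih

theorem lt_append_of_ne_nil (p : List α) {r : List α} (hr : r ≠ []) : p < p ++ r := by
  obtain ⟨a, r, rfl⟩ := exists_cons_of_ne_nil hr
  simpa using (append_lt_append_left_iff p).2 (nil_lt_cons a r)

/-- Core's `List.IsPrefix.le` concerns core's `≤` on lists, not the one of Mathlib's
`LinearOrder (List α)` used by `Finset.sort`. -/
theorem IsPrefix.le' {p v : List α} (h : p <+: v) : p ≤ v := by
  obtain ⟨r, rfl⟩ := h
  rcases eq_or_ne r [] with rfl | hr
  · simp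
  · exact (lt_append_of_ne_nil p hr).le

theorem cons_lt_singleton_iff {a b : α} {r : List α} : a :: r < [b] ↔ a < b := by
  simp [cons_lt_cons_iff]

theorem append_singleton_le_append_cons {x : List α} {j i : α} (h : j ≤ i) (r : List α) :
    x ++ [j] ≤ x ++ i :: r := by
  rcases h.eq_or_lt with rfl | h
  · exact IsPrefix.le' ⟨r, by simp⟩
  · exact ((append_lt_append_left_iff x).2 (Lex.rel h)).le

theorem IsPrefix.of_lt_of_lt_append_singleton {p v : List α} {b : α} (h₁ : p < v)
    (h₂ : v < p ++ [b]) : p <+: v := by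
  induction p generalizing v with
  | nil => exact nil_prefix
  | cons c p ih =>
    obtain _ | ⟨a, v⟩ := v
    · simp at h₁
    · simp only [cons_append, cons_lt_cons_iff] at h₁ h₂
      obtain rfl : a = c := by
        rcases h₁ with h₁ | h₁ <;> rcases h₂ with h₂ | h₂ <;> order
      simp only [lt_self_iff_false, false_or, true_and] at h₁ h₂
      exact cons_prefix_cons.2 ⟨rfl, ih h₁ h₂⟩

theorem append_singleton_le_and_lt_iff {x u : List α} {j j' : α} :
    x ++ [j] ≤ u ∧ u < x ++ [j'] ↔ ∃ i, (j ≤ i ∧ i < j') ∧ x ++ [i] <+: u := by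
  constructor
  · rintro ⟨h₁, h₂⟩
    obtain ⟨r, rfl⟩ := IsPrefix.of_lt_of_lt_append_singleton
      ((lt_append_of_ne_nil x (cons_ne_nil j [])).trans_le h₁) h₂
    obtain _ | ⟨i, r⟩ := r
    · rw [append_nil] at h₁
      exact absurd h₁ (not_le.2 (lt_append_of_ne_nil x (cons_ne_nil j [])))
    refine ⟨i, ⟨le_of_not_gt fun hij => ?_, ?_⟩, ⟨r, by simp⟩⟩
    · exact not_lt.2 h₁ ((append_lt_append_left_iff x).2 (cons_lt_singleton_iff.2 hij))
    · exact cons_lt_singleton_iff.1 ((append_lt_append_left_iff x).1 h₂)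
  · rintro ⟨i, ⟨hji, hij'⟩, r, rfl⟩
    rw [append_assoc, singleton_append]
    exact ⟨append_singleton_le_append_cons hji r,
      (append_lt_append_left_iff x).2 (cons_lt_singleton_iff.2 hij')⟩

end List

namespace Finset

variable {α : Type*} [LinearOrder α] (s : Finset α)

theorem sum_filter_lt_eq_add {M : Type*} [AddCommMonoid M] (f : α → M) {v w : α} (h : v ≤ w) :
    ∑ u ∈ s with u < w, f u = ∑ u ∈ s with u < v, f u + ∑ u ∈ s with v ≤ u ∧ u < w, f u := by
  rw [← sum_filter_add_sum_filter_not (s.filter (· < w)) (· < v), filter_filter, filter_filter]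
  congr 1 <;> refine sum_congr (filter_congr fun u _ => ?_) fun _ _ => rfl
  · exact ⟨And.right, fun hu => ⟨hu.trans_le h, hu⟩⟩
  · rw [not_lt, and_comm]

variable [BEq α] [LawfulBEq α]

theorem idxOf_sort_lt_idxOf_sort_iff {u w : α} (hu : u ∈ s) (hw : w ∈ s) :
    (s.sort (· ≤ ·)).idxOf u < (s.sort (· ≤ ·)).idxOf w ↔ u < w := by
  have hu' := List.idxOf_lt_length_iff.2 ((s.mem_sort (· ≤ ·)).2 hu)
  have hw' := List.idxOf_lt_length_iff.2 ((s.mem_sort (· ≤ ·)).2 hw)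
  have := s.sortedLT_sort.strictMono_get.lt_iff_lt (a := ⟨_, hu'⟩) (b := ⟨_, hw'⟩)
  rw [List.idxOf_get, List.idxOf_get] at this
  exact this.symm

theorem idxOf_sort_le_idxOf_sort_iff {u w : α} (hu : u ∈ s) (hw : w ∈ s) :
    (s.sort (· ≤ ·)).idxOf u ≤ (s.sort (· ≤ ·)).idxOf w ↔ u ≤ w := by
  rw [← not_lt, ← not_lt, s.idxOf_sort_lt_idxOf_sort_iff hw hu]

theorem sum_range_idxOf_sort {M : Type*} [AddCommMonoid M] (f : α → M) (d : α) {w : α}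
    (hw : w ∈ s) :
    ∑ i ∈ range ((s.sort (· ≤ ·)).idxOf w), f ((s.sort (· ≤ ·)).getD i d)
      = ∑ u ∈ s with u < w, f u := by
  have hwl := List.idxOf_lt_length_iff.2 ((s.mem_sort (· ≤ ·)).2 hw)
  refine sum_nbij' (fun i => (s.sort (· ≤ ·)).getD i d) (s.sort (· ≤ ·)).idxOf
    (fun i hi => ?_) (fun u hu => ?_) (fun i hi => ?_) (fun u hu => ?_) fun _ _ => rfl
  · have hi' := (mem_range.1 hi).trans hwl
    have hmem := (s.mem_sort (· ≤ ·)).1 (List.getElem_mem hi')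
    rw [List.getD_eq_getElem _ _ hi', mem_filter, ← s.idxOf_sort_lt_idxOf_sort_iff hmem hw,
      (s.sort_nodup _).idxOf_getElem i hi']
    exact ⟨hmem, mem_range.1 hi⟩
  · obtain ⟨hu, huw⟩ := mem_filter.1 hu
    exact mem_range.2 ((s.idxOf_sort_lt_idxOf_sort_iff hu hw).2 huw)
  · have hi' := (mem_range.1 hi).trans hwl
    rw [List.getD_eq_getElem _ _ hi', (s.sort_nodup _).idxOf_getElem i hi']
  · have hu' := List.idxOf_lt_length_iff.2 ((s.mem_sort (· ≤ ·)).2 (mem_filter.1 hu).1)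
    rw [List.getD_eq_getElem _ _ hu', List.getElem_idxOf]

theorem image_idxOf_sort {a b : α} (ha : a ∈ s) (hb : b ∈ s) :
    (s.sort (· ≤ ·)).idxOf '' {v | v ∈ s ∧ a ≤ v ∧ v ≤ b}
      = Set.Icc ((s.sort (· ≤ ·)).idxOf a) ((s.sort (· ≤ ·)).idxOf b) := by
  ext m
  constructor
  · rintro ⟨v, ⟨hv, hav, hvb⟩, rfl⟩
    exact ⟨(s.idxOf_sort_le_idxOf_sort_iff ha hv).2 hav,
      (s.idxOf_sort_le_idxOf_sort_iff hv hb).2 hvb⟩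
  · rintro ⟨ham, hmb⟩
    have hm := hmb.trans_lt (List.idxOf_lt_length_iff.2 ((s.mem_sort (· ≤ ·)).2 hb))
    have hv := (s.mem_sort (· ≤ ·)).1 (List.getElem_mem hm)
    have hidx := (s.sort_nodup (· ≤ ·)).idxOf_getElem m hm
    refine ⟨_, ⟨hv, ?_, ?_⟩, hidx⟩
    · rwa [← s.idxOf_sort_le_idxOf_sort_iff ha hv, hidx]
    · rwa [← s.idxOf_sort_le_idxOf_sort_iff hv hb, hidx]

end Finset

def subtree (T : Finset (List ℕ)) (c : List ℕ) : Finset (List ℕ) :=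
  T.filter (c <+: ·)

def children (T S : Finset (List ℕ)) : Finset (List ℕ) :=
  T.filter (fun y => y ≠ [] ∧ y.dropLast ∈ S)

def lukWAt (T : Finset (List ℕ)) (w : List ℕ) : ℤ :=
  ∑ u ∈ T with u < w, ((kch T u : ℤ) - 1)

open Finset

theorem sum_kch_eq_card_children (T S : Finset (List ℕ)) :
    ∑ u ∈ S, kch T u = #(children T S) := by
  rw [card_eq_sum_card_fiberwise (f := List.dropLast) fun y hy => (mem_filter.1 hy).2.2]
  refine sum_congr rfl fun u hu => ?_
  rw [kch, children, filter_filter]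
  exact congrArg card <| filter_congr fun y _ =>
    ⟨fun ⟨hy, hyu⟩ => ⟨⟨hy, hyu ▸ hu⟩, hyu⟩, fun ⟨⟨hy, _⟩, hyu⟩ => ⟨hy, hyu⟩⟩

theorem sum_kch_sub_one_eq (T S : Finset (List ℕ)) :
    ∑ u ∈ S, ((kch T u : ℤ) - 1) = #(children T S) - #S := by
  rw [sum_sub_distrib, ← Nat.cast_sum, sum_kch_eq_card_children]
  simp

theorem sum_kch_sub_one_nonpos {T S : Finset (List ℕ)} (h : children T S ⊆ S) :
    ∑ u ∈ S, ((kch T u : ℤ) - 1) ≤ 0 := by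
  rw [sum_kch_sub_one_eq, sub_nonpos]
  exact_mod_cast card_le_card h

theorem IsPlaneTree.mem_of_prefix {T : Finset (List ℕ)} (hT : IsPlaneTree T) {p v : List ℕ}
    (hv : v ∈ T) (h : p <+: v) : p ∈ T := by
  obtain ⟨r, rfl⟩ := h
  induction r using List.reverseRecOn with
  | nil => simpa using hv
  | append_singleton r a ih =>
    refine ih ?_
    simpa [← List.append_assoc] using hT.2.1 _ hv (by simp)

theorem IsPlaneTree.children_subtree {T : Finset (List ℕ)} (hT : IsPlaneTree T) {c : List ℕ}
    (hc : c ∈ T) : children T (subtree T c) = (subtree T c).erase c := by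
  ext y
  simp only [children, subtree, mem_filter, mem_erase]
  constructor
  · rintro ⟨hy, hy0, -, hcy⟩
    refine ⟨?_, hy, hcy.trans (List.dropLast_prefix y)⟩
    rintro rfl
    have := hcy.length_le
    rw [List.length_dropLast] at this
    have := List.length_pos_iff.2 hy0
    omega
  · rintro ⟨hyc, hy, hcy⟩
    have hy0 : y ≠ [] := by
      rintro rfl
      exact hyc (List.prefix_nil.1 hcy).symm
    rw [← List.dropLast_append_getLast hy0, List.prefix_concat_iff,
      List.dropLast_append_getLast hy0] at hcy
    exact ⟨hy, hy0, hT.2.1 y hy hy0, hcy.resolve_left (Ne.symm hyc)⟩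

theorem IsPlaneTree.sum_subtree {T : Finset (List ℕ)} (hT : IsPlaneTree T) {c : List ℕ}
    (hc : c ∈ T) : ∑ u ∈ subtree T c, ((kch T u : ℤ) - 1) = -1 := by
  have hcc : c ∈ subtree T c := mem_filter.2 ⟨hc, List.prefix_refl c⟩
  rw [sum_kch_sub_one_eq, hT.children_subtree hc, card_erase_of_mem hcc,
    Nat.cast_sub (card_pos.2 ⟨c, hcc⟩)]
  ring

theorem filter_append_singleton_le_lt_eq_biUnion (T : Finset (List ℕ)) (x : List ℕ) (j j' : ℕ) :
    T.filter (fun u => x ++ [j] ≤ u ∧ u < x ++ [j'])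
      = (Ico j j').biUnion (fun i => subtree T (x ++ [i])) := by
  ext u
  simp only [mem_filter, mem_biUnion, mem_Ico, subtree, List.append_singleton_le_and_lt_iff]
  tauto

theorem pairwiseDisjoint_subtree_append_singleton (T : Finset (List ℕ)) (x : List ℕ)
    (I : Set ℕ) : I.PairwiseDisjoint (fun i => subtree T (x ++ [i])) := by
  intro i _ i' _ hii'
  refine disjoint_left.2 fun u hu hu' => hii' ?_
  have h := List.prefix_of_prefix_length_le (mem_filter.1 hu).2 (mem_filter.1 hu').2 (by simp)
  simpa using h.eq_of_length (by simp)

theorem lukWAt_eq_add (T : Finset (List ℕ)) {v w : List ℕ} (h : v ≤ w) :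
    lukWAt T w = lukWAt T v + ∑ u ∈ T with v ≤ u ∧ u < w, ((kch T u : ℤ) - 1) := by
  unfold lukWAt
  -- the filters here use core's decidability of `<` on lists, not the `LinearOrder` one
  convert T.sum_filter_lt_eq_add (fun u => (kch T u : ℤ) - 1) h

theorem IsPlaneTree.lukWAt_append_one {T : Finset (List ℕ)} (hT : IsPlaneTree T) {x : List ℕ}
    (hx : x ∈ T) : lukWAt T (x ++ [1]) = lukWAt T x + kch T x - 1 := by
  have hx1 : x < x ++ [1] := List.lt_append_of_ne_nil x (List.cons_ne_nil 1 [])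
  have hfilter : T.filter (fun u => x ≤ u ∧ u < x ++ [1]) = {x} := by
    ext u
    simp only [mem_filter, mem_singleton]
    refine ⟨fun ⟨hu, hxu, hu1⟩ => ?_, by rintro rfl; exact ⟨hx, le_rfl, hx1⟩⟩
    by_contra hne
    obtain ⟨r, rfl⟩ :=
      List.IsPrefix.of_lt_of_lt_append_singleton (lt_of_le_of_ne hxu (Ne.symm hne)) hu1
    obtain _ | ⟨i, r⟩ := r
    · simp at hne
    · have hi : i < 1 := List.cons_lt_singleton_iff.1 ((List.append_lt_append_left_iff x).1 hu1)
      have := (hT.2.2 x hx i).1 (hT.mem_of_prefix hu ⟨r, by simp⟩)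
      omega
  rw [lukWAt_eq_add T hx1.le, hfilter, sum_singleton]
  ring

theorem IsPlaneTree.lukWAt_append_singleton {T : Finset (List ℕ)} (hT : IsPlaneTree T)
    {x : List ℕ} (hx : x ∈ T) {j j' : ℕ} (hj : 1 ≤ j) (hjj' : j ≤ j') (hj' : j' ≤ kch T x) :
    lukWAt T (x ++ [j']) = lukWAt T (x ++ [j]) + j - j' := by
  have hchild (i) (hi : i ∈ Ico j j') : x ++ [i] ∈ T :=
    (hT.2.2 x hx i).2 ⟨hj.trans (mem_Ico.1 hi).1, (mem_Ico.1 hi).2.le.trans hj'⟩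
  rw [lukWAt_eq_add T (List.append_singleton_le_append_cons hjj' []),
    filter_append_singleton_le_lt_eq_biUnion,
    sum_biUnion (pairwiseDisjoint_subtree_append_singleton T x _),
    sum_congr rfl fun i hi => hT.sum_subtree (hchild i hi), sum_const, Nat.card_Ico,
    nsmul_eq_mul, Nat.cast_sub hjj']
  ring

theorem lukWAt_append_singleton_le {T : Finset (List ℕ)} {x v : List ℕ} {j j' : ℕ}
    (hv : x ++ [j] ≤ v) (hv' : v ≤ x ++ [j']) : lukWAt T (x ++ [j']) ≤ lukWAt T v := by
  have hclosed : children T (T.filter (fun u => v ≤ u ∧ u < x ++ [j']))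
      ⊆ T.filter (fun u => v ≤ u ∧ u < x ++ [j']) := by
    intro y hy
    obtain ⟨hyT, -, hp⟩ := mem_filter.1 hy
    obtain ⟨-, hvp, hpj'⟩ := mem_filter.1 hp
    obtain ⟨i, ⟨-, hi⟩, hxi⟩ := List.append_singleton_le_and_lt_iff.1 ⟨hv.trans hvp, hpj'⟩
    exact mem_filter.2 ⟨hyT, hvp.trans (List.dropLast_prefix y).le',
      (List.append_singleton_le_and_lt_iff.2 ⟨i, ⟨le_rfl, hi⟩, hxi.trans y.dropLast_prefix⟩).2⟩
  rw [lukWAt_eq_add T hv']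
  linarith [sum_kch_sub_one_nonpos hclosed]

theorem lukW_idxOf {T : Finset (List ℕ)} {w : List ℕ} (hw : w ∈ T) :
    lukW T ((T.sort (· ≤ ·)).idxOf w) = lukWAt T w := by
  unfold lukW lukWAt
  convert T.sum_range_idxOf_sort (fun u => (kch T u : ℤ) - 1) [] hw

theorem lukW_image_Icc_idxOf {T : Finset (List ℕ)} {a b : List ℕ} (ha : a ∈ T) (hb : b ∈ T) :
    lukW T '' Set.Icc ((T.sort (· ≤ ·)).idxOf a) ((T.sort (· ≤ ·)).idxOf b)
      = lukWAt T '' {v | v ∈ T ∧ a ≤ v ∧ v ≤ b} := by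
  rw [← T.image_idxOf_sort ha hb, Set.image_image]
  exact Set.image_congr fun v hv => lukW_idxOf hv.1

/-- For a plane tree `T` with Łukasiewicz path `W`, identifying a vertex with its lexicographic
index, for every vertex `x` and all `1 ≤ j ≤ j' ≤ k_x` one has `W (x k_x) = W x`,
`W (x j')` is the minimum of `W` over the lexicographic interval `[x j, x j']`, and
`j' - j = W (x j) - W (x j')`. -/
theorem lukasiewicz_path_children (T : Finset (List ℕ)) (hT : IsPlaneTree T)
    (x : List ℕ) (hx : x ∈ T) (j j' : ℕ) (h1 : 1 ≤ j) (h2 : j ≤ j') (h3 : j' ≤ kch T x) :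
    lukW T ((T.sort (· ≤ ·)).idxOf (x ++ [kch T x]))
        = lukW T ((T.sort (· ≤ ·)).idxOf x) ∧
    lukW T ((T.sort (· ≤ ·)).idxOf (x ++ [j']))
        = sInf (lukW T '' Set.Icc ((T.sort (· ≤ ·)).idxOf (x ++ [j]))
            ((T.sort (· ≤ ·)).idxOf (x ++ [j']))) ∧
    ((j' : ℤ) - j) = lukW T ((T.sort (· ≤ ·)).idxOf (x ++ [j]))
        - lukW T ((T.sort (· ≤ ·)).idxOf (x ++ [j'])) := by
  have hk : 1 ≤ kch T x := h1.trans (h2.trans h3)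
  have hchild (i) (hi : 1 ≤ i) (hik : i ≤ kch T x) : x ++ [i] ∈ T := (hT.2.2 x hx i).2 ⟨hi, hik⟩
  have hj := hchild j h1 (h2.trans h3)
  have hj' := hchild j' (h1.trans h2) h3
  rw [lukW_idxOf (hchild _ hk le_rfl), lukW_idxOf hx, lukW_idxOf hj, lukW_idxOf hj',
    lukW_image_Icc_idxOf hj hj']
  refine ⟨?_, ?_, ?_⟩
  · rw [hT.lukWAt_append_singleton hx le_rfl hk le_rfl, hT.lukWAt_append_one hx]
    ring
  · refine (IsLeast.csInf_eq ⟨?_, ?_⟩).symm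
    · exact ⟨_, ⟨hj', List.append_singleton_le_append_cons h2 [], le_rfl⟩, rfl⟩
    rintro _ ⟨v, ⟨-, hv, hv'⟩, rfl⟩
    exact lukWAt_append_singleton_le hv hv'
  · rw [hT.lukWAt_append_singleton hx h1 h2 h3]
    ring
end

section
/- Let X_1, …, X_h be obtained by sampling without replacement from a finite population of non-negative reals, and let X*_1, …, X*_h be an i.i.d. sample (with replacement) from the same population. Then for every convex function f: E[f(X_1 + ⋯ + X_h)] ≤ E[f(X*_1 + ⋯ + X*_h)]. -/
/-!
A sample `g : ι → α` with replacement factors as `g = σ ∘ e ∘ j` with `σ` a permutation of the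
population, `e` the fixed embedding and `j : ι → ι`. Averaging the sum `∑ i, a (π (e (τ (j i))))`
over `τ : Perm ι` gives back the without-replacement sum `∑ i, a (π (e i))`, so by Jensen
`f` of the latter is at most the average of `f` of the former; since the uniform law on
permutations is invariant under right multiplication, `τ` and `σ` can then be absorbed into `π`.
Averaging over `g`, and using that `π ∘ g` is uniform when `g` is, gives the comparison.
-/

open Finset

namespace Equiv.Perm

variable {ι M : Type*} [Fintype ι] [DecidableEq ι] [AddCommMonoid M]

theorem sum_apply_eq_sum_apply (c : ι → M) (x y : ι) :
    ∑ τ : Perm ι, c (τ x) = ∑ τ : Perm ι, c (τ y) := by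
  rw [← Equiv.sum_comp (Equiv.mulRight (swap x y))]
  simp

theorem sum_sum_apply_comp (c : ι → M) (j : ι → ι) :
    ∑ τ : Perm ι, ∑ i, c (τ (j i)) = (Fintype.card ι).factorial • ∑ i, c i := by
  calc ∑ τ : Perm ι, ∑ i, c (τ (j i))
      = ∑ i, ∑ τ : Perm ι, c (τ i) := by
        rw [sum_comm]
        exact sum_congr rfl fun i _ => sum_apply_eq_sum_apply c (j i) i
    _ = ∑ _τ : Perm ι, ∑ i, c i := by
        rw [sum_comm]
        exact sum_congr rfl fun τ _ => Equiv.sum_comp τ c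
    _ = (Fintype.card ι).factorial • ∑ i, c i := by
        rw [sum_const, card_univ, Fintype.card_perm]

end Equiv.Perm

theorem ConvexOn.map_sum_div_card_le {β : Type*} [Fintype β] [Nonempty β] {s : Set ℝ}
    {f : ℝ → ℝ} (hf : ConvexOn ℝ s f) (p : β → ℝ) (hp : ∀ x, p x ∈ s) :
    f ((∑ x, p x) / Fintype.card β) ≤ (∑ x, f (p x)) / Fintype.card β := by
  have hcard : (0 : ℝ) < Fintype.card β := by exact_mod_cast Fintype.card_pos
  have := hf.map_sum_le (t := univ) (w := fun _ => (Fintype.card β : ℝ)⁻¹) (p := p)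
    (fun _ _ => by positivity) (by simp [hcard.ne']) (fun x _ => hp x)
  simpa [← mul_sum, div_eq_inv_mul] using this

theorem ConvexOn.map_sum_le_sum_perm_div {ι : Type*} [Fintype ι] [DecidableEq ι] {f : ℝ → ℝ}
    (hf : ConvexOn ℝ Set.univ f) (c : ι → ℝ) (j : ι → ι) :
    f (∑ i, c i) ≤ (∑ τ : Equiv.Perm ι, f (∑ i, c (τ (j i)))) / (Fintype.card ι).factorial := by
  have hfac : ((Fintype.card ι).factorial : ℝ) ≠ 0 := by positivity
  have := hf.map_sum_div_card_le (fun τ : Equiv.Perm ι => ∑ i, c (τ (j i))) fun _ => trivial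
  rwa [Equiv.Perm.sum_sum_apply_comp, Fintype.card_perm, nsmul_eq_mul,
    mul_div_cancel_left₀ _ hfac] at this

theorem Function.Embedding.exists_comp_eq {ι α : Type*} [Fintype ι] [Fintype α] [DecidableEq α]
    (hcard : Fintype.card ι ≤ Fintype.card α) (g : ι → α) :
    ∃ (k : ι ↪ α) (j : ι → ι), ∀ i, k (j i) = g i := by
  obtain ⟨t, hgt, ht⟩ := exists_superset_card_eq (s := univ.image g)
    (card_image_le.trans_eq card_univ) hcard
  let e : t ≃ ι := Fintype.equivOfCardEq (by simpa using ht)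
  refine ⟨e.symm.toEmbedding.trans (.subtype _),
    fun i => e ⟨g i, hgt (mem_image_of_mem g (mem_univ i))⟩, fun i => ?_⟩
  simp

section Sampling

variable {ι α : Type*} [Fintype ι] [DecidableEq ι] [Fintype α] [DecidableEq α] {f : ℝ → ℝ}

theorem sum_perm_map_sum_embedding_le_comp (hf : ConvexOn ℝ Set.univ f) (a : α → ℝ)
    (e : ι ↪ α) (j : ι → ι) :
    ∑ π : Equiv.Perm α, f (∑ i, a (π (e i))) ≤ ∑ π : Equiv.Perm α, f (∑ i, a (π (e (j i)))) := by
  have hfac : ((Fintype.card ι).factorial : ℝ) ≠ 0 := by positivity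
  have reindex (τ : Equiv.Perm ι) : ∑ π : Equiv.Perm α, f (∑ i, a (π (e (τ (j i)))))
      = ∑ π : Equiv.Perm α, f (∑ i, a (π (e (j i)))) := by
    symm
    rw [← Equiv.sum_comp (Equiv.mulRight (τ.viaEmbedding e))]
    simp [Equiv.Perm.viaEmbedding_apply]
  calc ∑ π : Equiv.Perm α, f (∑ i, a (π (e i)))
      ≤ ∑ π : Equiv.Perm α, (∑ τ : Equiv.Perm ι, f (∑ i, a (π (e (τ (j i))))))
          / (Fintype.card ι).factorial :=
        sum_le_sum fun π _ => hf.map_sum_le_sum_perm_div (fun i => a (π (e i))) j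
    _ = (∑ τ : Equiv.Perm ι, ∑ π : Equiv.Perm α, f (∑ i, a (π (e (τ (j i))))))
          / (Fintype.card ι).factorial := by
        rw [← sum_div, sum_comm]
    _ = ∑ π : Equiv.Perm α, f (∑ i, a (π (e (j i)))) := by
        rw [sum_congr rfl fun τ _ => reindex τ, sum_const, card_univ, Fintype.card_perm,
          nsmul_eq_mul, mul_div_cancel_left₀ _ hfac]

theorem sum_perm_map_sum_embedding_le (hf : ConvexOn ℝ Set.univ f) (a : α → ℝ)
    (e : ι ↪ α) (g : ι → α) :
    ∑ π : Equiv.Perm α, f (∑ i, a (π (e i))) ≤ ∑ π : Equiv.Perm α, f (∑ i, a (π (g i))) := by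
  obtain ⟨k, j, hkj⟩ := Function.Embedding.exists_comp_eq (Fintype.card_le_of_embedding e) g
  obtain ⟨σ, hσ⟩ := Equiv.Perm.exists_extending_pair e k e.injective k.injective
  calc ∑ π : Equiv.Perm α, f (∑ i, a (π (e i)))
      ≤ ∑ π : Equiv.Perm α, f (∑ i, a (π (e (j i)))) :=
        sum_perm_map_sum_embedding_le_comp hf a e j
    _ = ∑ π : Equiv.Perm α, f (∑ i, a ((π * σ) (e (j i)))) :=
        (Equiv.sum_comp (Equiv.mulRight σ) _).symm
    _ = ∑ π : Equiv.Perm α, f (∑ i, a (π (g i))) := by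
        simp [hσ, hkj]

theorem sum_perm_map_sum_embedding_div_le (hf : ConvexOn ℝ Set.univ f) (a : α → ℝ)
    (e : ι ↪ α) :
    (∑ π : Equiv.Perm α, f (∑ i, a (π (e i)))) / (Fintype.card α).factorial
      ≤ (∑ g : ι → α, f (∑ i, a (g i))) / (Fintype.card α : ℝ) ^ Fintype.card ι := by
  have hfun : (0 : ℝ) < (Fintype.card α : ℝ) ^ Fintype.card ι := by
    have : 0 < Fintype.card (ι → α) := @Fintype.card_pos _ _ ⟨e⟩
    rw [Fintype.card_fun] at this
    exact_mod_cast this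
  rw [div_le_div_iff₀ (by positivity) hfun]
  calc (∑ π : Equiv.Perm α, f (∑ i, a (π (e i)))) * (Fintype.card α : ℝ) ^ Fintype.card ι
      = ∑ _g : ι → α, ∑ π : Equiv.Perm α, f (∑ i, a (π (e i))) := by
        rw [sum_const, card_univ, Fintype.card_fun, nsmul_eq_mul, Nat.cast_pow, mul_comm]
    _ ≤ ∑ g : ι → α, ∑ π : Equiv.Perm α, f (∑ i, a (π (g i))) :=
        sum_le_sum fun g _ => sum_perm_map_sum_embedding_le hf a e g
    _ = ∑ _π : Equiv.Perm α, ∑ g : ι → α, f (∑ i, a (g i)) := by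
        rw [sum_comm]
        exact sum_congr rfl fun π _ =>
          Equiv.sum_comp ((Equiv.refl ι).arrowCongr π) fun g => f (∑ i, a (g i))
    _ = (∑ g : ι → α, f (∑ i, a (g i))) * (Fintype.card α).factorial := by
        rw [sum_const, card_univ, Fintype.card_perm, nsmul_eq_mul, mul_comm]

end Sampling

theorem sampling_without_replacement_convex_order_general (n h : ℕ) (hh : h ≤ n)
    (a : Fin n → ℝ)
    (f : ℝ → ℝ) (hf : ConvexOn ℝ Set.univ f) :
    (∑ π : Equiv.Perm (Fin n), f (∑ i : Fin h, a (π (Fin.castLE hh i)))) / (Nat.factorial n)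
      ≤ (∑ g : Fin h → Fin n, f (∑ i : Fin h, a (g i))) / ((n : ℝ) ^ h) := by
  simpa using sum_perm_map_sum_embedding_div_le hf a (Fin.castLEEmb hh)

/-- Hoeffding's comparison: if `X_1, …, X_h` are sampled without replacement from a finite
population `a : Fin n → ℝ` of non-negative reals (uniform random injection, modelled by a
uniform permutation) and `X*_1, …, X*_h` are i.i.d. uniform samples from the same population,
then for every convex `f`, `E[f(X_1 + ⋯ + X_h)] ≤ E[f(X*_1 + ⋯ + X*_h)]`. -/
theorem sampling_without_replacement_convex_order (n h : ℕ) (hn : 1 ≤ n) (hh : h ≤ n)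
    (a : Fin n → ℝ) (ha : ∀ i, 0 ≤ a i)
    (f : ℝ → ℝ) (hf : ConvexOn ℝ Set.univ f) :
    (∑ π : Equiv.Perm (Fin n), f (∑ i : Fin h, a (π (Fin.castLE hh i)))) / (Nat.factorial n)
      ≤ (∑ g : Fin h → Fin n, f (∑ i : Fin h, a (g i))) / ((n : ℝ) ^ h) :=
  sampling_without_replacement_convex_order_general n h hh a f hf
end
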